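/- Strong orientation preservation: if a ≥ 0 satisfies a < α(1 − β(β²η² − ι²)^{−1/2}), then for every (m,n) ∈ ℝ³ × ℝ³ the strains (u,v) = F(m,n) satisfy a·(u₁² + u₂²)^{1/2} < v₃. -/
import Mathlib


/-- The complementary quadratic form `Q*(m,n)`. -/
noncomputable def Qstar (α β ζ η ι : ℝ) (m n : Fin 3 → ℝ) : ℝ :=
  (m 0 ^ 2 + m 1 ^ 2) / α ^ 2 + (n 0 ^ 2 + n 1 ^ 2) / ζ ^ 2
    + (η ^ 2 * m 2 ^ 2 + β ^ 2 * n 2 ^ 2 - 2 * ι * m 2 * n 2) / (β ^ 2 * η ^ 2 - ι ^ 2)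

/-- The forward constitutive map `F : (m,n) ↦ (u,v)`, with
`λ = (γ^p + Q*(m,n)^{p/2})^{−1/p}`. -/
noncomputable def Fmap (p α β γ ζ η ι : ℝ) (m n : Fin 3 → ℝ) :
    (Fin 3 → ℝ) × (Fin 3 → ℝ) :=
  let lam : ℝ := (γ ^ p + (Qstar α β ζ η ι m n) ^ (p / 2)) ^ (-(1 / p))
  (![lam * m 0 / α ^ 2, lam * m 1 / α ^ 2,
      lam * (η ^ 2 * m 2 - ι * n 2) / (β ^ 2 * η ^ 2 - ι ^ 2)],
   ![lam * n 0 / ζ ^ 2, lam * n 1 / ζ ^ 2,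
      1 + lam * (β ^ 2 * n 2 - ι * m 2) / (β ^ 2 * η ^ 2 - ι ^ 2)])

set_option maxHeartbeats 1000000 in
/-- strong orientation preservation: if `0 ≤ a` and
`a < α(1 − β(β²η² − ι²)^{−1/2})`, then the strains `(u,v) = F(m,n)` satisfy
`a·(u₁² + u₂²)^{1/2} < v₃` for every `(m,n)`. -/
theorem strong_orientation_preservation (p α β γ ζ η ι a : ℝ) (hp : 0 < p) (hα : 0 < α)
    (hβ : 0 < β) (hγ : 0 < γ) (hζ : 0 < ζ) (hη : 0 < η)
    (hβηι : 0 < β ^ 2 * η ^ 2 - ι ^ 2) (ha : 0 ≤ a)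
    (haup : a < α * (1 - β * (β ^ 2 * η ^ 2 - ι ^ 2) ^ (-(1 / 2) : ℝ))) :
    ∀ m n : Fin 3 → ℝ,
      a * ((Fmap p α β γ ζ η ι m n).1 0 ^ 2 + (Fmap p α β γ ζ η ι m n).1 1 ^ 2)
            ^ ((1 : ℝ) / 2)
        < (Fmap p α β γ ζ η ι m n).2 2 := by
  intro m n
  simp only [Fmap, Qstar, Matrix.cons_val_zero, Matrix.cons_val_one, Matrix.head_cons,
    Matrix.cons_val_two, Matrix.tail_cons]
  -- two polynomial facts, proved before generalizing D
  have hnum : 0 ≤ η ^ 2 * m 2 ^ 2 + β ^ 2 * n 2 ^ 2 - 2 * ι * m 2 * n 2 := by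
    nlinarith [sq_nonneg (η ^ 2 * m 2 - ι * n 2), mul_nonneg hβηι.le (sq_nonneg (n 2)),
      mul_pos hη hη]
  have hsqkey : (β ^ 2 * n 2 - ι * m 2) ^ 2
      ≤ β ^ 2 * (η ^ 2 * m 2 ^ 2 + β ^ 2 * n 2 ^ 2 - 2 * ι * m 2 * n 2) := by
    nlinarith [mul_nonneg hβηι.le (sq_nonneg (m 2))]
  -- generalize D
  obtain ⟨D, hDdef⟩ : ∃ D, β ^ 2 * η ^ 2 - ι ^ 2 = D := ⟨_, rfl⟩
  rw [hDdef] at hβηι haup ⊢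
  have hD : (0:ℝ) < D := hβηι
  -- generalize Q
  obtain ⟨Q, hQdef⟩ : ∃ Q, (m 0 ^ 2 + m 1 ^ 2) / α ^ 2 + (n 0 ^ 2 + n 1 ^ 2) / ζ ^ 2
      + (η ^ 2 * m 2 ^ 2 + β ^ 2 * n 2 ^ 2 - 2 * ι * m 2 * n 2) / D = Q := ⟨_, rfl⟩
  rw [hQdef]
  have hQ0 : 0 ≤ Q := by
    rw [← hQdef]
    have h1 : 0 ≤ (m 0 ^ 2 + m 1 ^ 2) / α ^ 2 := by positivity
    have h2 : 0 ≤ (n 0 ^ 2 + n 1 ^ 2) / ζ ^ 2 := by positivity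
    have h3 : 0 ≤ (η ^ 2 * m 2 ^ 2 + β ^ 2 * n 2 ^ 2 - 2 * ι * m 2 * n 2) / D :=
      div_nonneg hnum hD.le
    linarith
  -- generalize lam
  obtain ⟨lam, hlamdef⟩ : ∃ l, (γ ^ p + Q ^ (p / 2)) ^ (-(1 / p)) = l := ⟨_, rfl⟩
  rw [hlamdef]
  have hbase : 0 < γ ^ p + Q ^ (p / 2) :=
    add_pos_of_pos_of_nonneg (Real.rpow_pos_of_pos hγ p) (Real.rpow_nonneg hQ0 _)
  have hlam0 : 0 < lam := hlamdef ▸ Real.rpow_pos_of_pos hbase _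
  -- generalize the square roots
  obtain ⟨X, hX0, hX2⟩ : ∃ X, 0 ≤ X ∧ X ^ 2 = m 0 ^ 2 + m 1 ^ 2 :=
    ⟨Real.sqrt _, Real.sqrt_nonneg _, Real.sq_sqrt (by positivity)⟩
  obtain ⟨Y, hY0, hY2⟩ : ∃ Y, 0 ≤ Y ∧
      Y ^ 2 = η ^ 2 * m 2 ^ 2 + β ^ 2 * n 2 ^ 2 - 2 * ι * m 2 * n 2 :=
    ⟨Real.sqrt _, Real.sqrt_nonneg _, Real.sq_sqrt hnum⟩
  obtain ⟨sD, hsDdef⟩ : ∃ s, Real.sqrt D = s := ⟨_, rfl⟩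
  obtain ⟨sQ, hsQdef⟩ : ∃ s, Real.sqrt Q = s := ⟨_, rfl⟩
  have hsD : 0 < sD := hsDdef ▸ Real.sqrt_pos.mpr hD
  have hsQ0 : 0 ≤ sQ := hsQdef ▸ Real.sqrt_nonneg _
  have hsD2 : sD ^ 2 = D := by rw [← hsDdef]; exact Real.sq_sqrt hD.le
  have hsQ2 : sQ ^ 2 = Q := by rw [← hsQdef]; exact Real.sq_sqrt hQ0
  have hDrpow : D ^ (-(1 / 2) : ℝ) = sD⁻¹ := by
    rw [Real.rpow_neg hD.le, ← hsDdef, Real.sqrt_eq_rpow]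
  have hcd : a / α + β / sD < 1 := by
    rw [hDrpow] at haup
    have h1 : a < (1 - β / sD) * α := by
      rw [div_eq_mul_inv]; linarith [haup]
    have h2 : a / α < 1 - β / sD := (div_lt_iff₀ hα).mpr h1
    linarith
  have hxQ : X / α ≤ sQ := by
    have h1 : (X / α) ^ 2 ≤ sQ ^ 2 := by
      rw [div_pow, hX2, hsQ2, ← hQdef]
      have h2 : 0 ≤ (n 0 ^ 2 + n 1 ^ 2) / ζ ^ 2 := by positivity
      have h3 : 0 ≤ (η ^ 2 * m 2 ^ 2 + β ^ 2 * n 2 ^ 2 - 2 * ι * m 2 * n 2) / D :=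
        div_nonneg hnum hD.le
      linarith
    have h := abs_le_of_sq_le_sq h1 hsQ0
    linarith [le_abs_self (X / α)]
  have hyQ : Y / sD ≤ sQ := by
    have h1 : (Y / sD) ^ 2 ≤ sQ ^ 2 := by
      rw [div_pow, hY2, hsD2, hsQ2, ← hQdef]
      have h2 : 0 ≤ (n 0 ^ 2 + n 1 ^ 2) / ζ ^ 2 := by positivity
      have h4 : 0 ≤ (m 0 ^ 2 + m 1 ^ 2) / α ^ 2 := by positivity
      linarith
    have h := abs_le_of_sq_le_sq h1 hsQ0
    linarith [le_abs_self (Y / sD)]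
  -- abbreviations A, B
  obtain ⟨A, hAdef⟩ : ∃ A, a * X / α ^ 2 = A := ⟨_, rfl⟩
  obtain ⟨B, hBdef⟩ : ∃ B, β * Y / D = B := ⟨_, rfl⟩
  have hA0 : 0 ≤ A := by rw [← hAdef]; positivity
  have hB0 : 0 ≤ B := by rw [← hBdef]; positivity
  have hAc : A = (a / α) * (X / α) := by rw [← hAdef]; ring
  have hBc : B = (β / sD) * (Y / sD) := by rw [← hBdef, div_mul_div_comm, ← hsD2]; ring
  -- main bound
  have hmain : lam * (A + B) < 1 := by
    rcases eq_or_lt_of_le (add_nonneg hA0 hB0) with h0 | hpos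
    · rw [← h0, mul_zero]; norm_num
    · have hsum : A + B ≤ (a / α + β / sD) * sQ := by
        have h1 : A ≤ (a / α) * sQ := by
          rw [hAc]; exact mul_le_mul_of_nonneg_left hxQ (div_nonneg ha hα.le)
        have h2 : B ≤ (β / sD) * sQ := by
          rw [hBc]; exact mul_le_mul_of_nonneg_left hyQ (div_nonneg hβ.le hsD.le)
        have h3 : ((a / α) + (β / sD)) * sQ = (a / α) * sQ + (β / sD) * sQ := by ring
        linarith
      have hsQpos : 0 < sQ := by
        by_contra h
        push_neg at h
        have h0' : sQ = 0 := le_antisymm h hsQ0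
        rw [h0', mul_zero] at hsum
        linarith
      have hQpos : 0 < Q := by rw [← hsQ2]; exact pow_pos hsQpos 2
      have hlamlt : lam < sQ⁻¹ := by
        have h1 : lam < (Q ^ (p / 2)) ^ (-(1 / p) : ℝ) := by
          rw [← hlamdef]
          refine Real.rpow_lt_rpow_of_neg (Real.rpow_pos_of_pos hQpos _) ?_ ?_
          · linarith [Real.rpow_pos_of_pos hγ p]
          · rw [neg_lt, neg_zero]; positivity
        have h2 : (Q ^ (p / 2)) ^ (-(1 / p) : ℝ) = Q ^ (-(1 / 2) : ℝ) := by
          rw [← Real.rpow_mul hQ0]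
          congr 1
          field_simp
        have h3 : Q ^ (-(1 / 2) : ℝ) = sQ⁻¹ := by
          rw [Real.rpow_neg hQ0, ← hsQdef, Real.sqrt_eq_rpow]
        rw [h2, h3] at h1
        exact h1
      calc lam * (A + B) < sQ⁻¹ * (A + B) := mul_lt_mul_of_pos_right hlamlt hpos
        _ ≤ sQ⁻¹ * ((a / α + β / sD) * sQ) :=
            mul_le_mul_of_nonneg_left hsum (inv_nonneg.mpr hsQ0)
        _ = a / α + β / sD := by field_simp
        _ < 1 := hcd
  -- bound on the v₃ numerator
  have habs : -(β ^ 2 * n 2 - ι * m 2) ≤ β * Y := by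
    have hsq : (β ^ 2 * n 2 - ι * m 2) ^ 2 ≤ (β * Y) ^ 2 := by
      rw [mul_pow, hY2]
      exact hsqkey
    have h := abs_le_of_sq_le_sq hsq (mul_nonneg hβ.le hY0)
    linarith [(abs_le.mp h).1]
  have hB' : -B ≤ (β ^ 2 * n 2 - ι * m 2) / D := by
    rw [← hBdef, ← neg_div]
    exact div_le_div_of_nonneg_right (by linarith) hD.le
  -- rewrite the left-hand side
  have hrw : ((lam * m 0 / α ^ 2) ^ 2 + (lam * m 1 / α ^ 2) ^ 2 : ℝ) ^ ((1:ℝ) / 2)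
      = lam * X / α ^ 2 := by
    rw [← Real.sqrt_eq_rpow]
    have he : (lam * m 0 / α ^ 2) ^ 2 + (lam * m 1 / α ^ 2) ^ 2
        = (lam * X / α ^ 2) ^ 2 := by
      rw [div_pow, div_pow, div_pow, mul_pow, mul_pow, mul_pow, hX2]; ring
    rw [he, Real.sqrt_sq (by positivity)]
  rw [hrw]
  have h1 : lam * A + lam * B < 1 := by rw [← mul_add]; exact hmain
  have h2 : lam * (-B) ≤ lam * ((β ^ 2 * n 2 - ι * m 2) / D) :=
    mul_le_mul_of_nonneg_left hB' hlam0.le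
  have e3 : lam * (-B) = -(lam * B) := by ring
  rw [e3] at h2
  have e1 : a * (lam * X / α ^ 2) = lam * A := by rw [← hAdef]; ring
  have e2 : lam * (β ^ 2 * n 2 - ι * m 2) / D = lam * ((β ^ 2 * n 2 - ι * m 2) / D) := by
    ring
  rw [e1, e2]
  linarith
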